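/- (Lemma 4.3, trace bound) Tr(C^lᵀC^l) ≤ k(E(X^h) − E(Y)) / (λ_k − λ_{k+1}). -/

import Mathlib

open Matrix

/-- Energy of the space spanned by a `B`-orthonormal matrix `Z`:
`E(Z) = Tr(ZᵀAZ)/Tr(ZᵀBZ)`. -/
noncomputable def energy {n k : Type*} [Fintype n] [Fintype k]
    (A B : Matrix n n ℝ) (Z : Matrix n k ℝ) : ℝ :=
  (Zᵀ * A * Z).trace / (Zᵀ * B * Z).trace

/-!
Write `w i = (C Cᵀ) i i` for the squared row norms of `C`. Since `Y = X C` is `B`-orthonormal and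
`X` is, `C` has orthonormal columns, so `0 ≤ w ≤ 1` and `∑ w = k`; moreover `k E(Y) = ∑ λᵢ wᵢ` and
`k E(Xʰ) = ∑_{i ≤ k} λᵢ`. The weight `Tr(CˡᵀCˡ) = ∑_{i > k} wᵢ` sitting in the low block equals the
weight `∑_{i ≤ k} (1 - wᵢ)` missing from the high block: each unit of it costs at least `λ_k` there
and earns at most `λ_{k+1}` below, so `k (E(Xʰ) - E(Y)) ≥ (λ_k - λ_{k+1}) Tr(CˡᵀCˡ)`.
-/

namespace Matrix

variable {m n : Type*}

lemma diag_mul_transpose_nonneg [Fintype n] (C : Matrix m n ℝ) (i : m) : 0 ≤ (C * Cᵀ) i i :=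
  Finset.sum_nonneg fun j _ => mul_self_nonneg (C i j)

lemma diag_mul_transpose_le_one [Fintype m] [Fintype n] [DecidableEq m] [DecidableEq n]
    {C : Matrix m n ℝ} (hC : Cᵀ * C = 1) (i : m) : (C * Cᵀ) i i ≤ 1 := by
  -- `1 - C Cᵀ` is a symmetric idempotent, hence of the form `Pᵀ P`.
  have hP : (1 - C * Cᵀ)ᵀ * (1 - C * Cᵀ) = 1 - C * Cᵀ := by
    have hidem : C * Cᵀ * (C * Cᵀ) = C * Cᵀ := by
      rw [Matrix.mul_assoc, ← Matrix.mul_assoc Cᵀ, hC, Matrix.one_mul]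
    simp only [transpose_sub, transpose_one, transpose_mul, transpose_transpose, Matrix.sub_mul,
      Matrix.mul_sub, Matrix.one_mul, Matrix.mul_one, hidem]
    abel
  have h := (posSemidef_conjTranspose_mul_self (1 - C * Cᵀ)).diag_nonneg (i := i)
  rw [conjTranspose_eq_transpose_of_trivial, hP] at h
  simpa using h

lemma sum_diag_mul_transpose [Fintype m] [Fintype n] [DecidableEq n] {C : Matrix m n ℝ}
    (hC : Cᵀ * C = 1) : ∑ i, (C * Cᵀ) i i = Fintype.card n := by
  rw [show ∑ i, (C * Cᵀ) i i = (C * Cᵀ).trace from rfl, trace_mul_comm, hC, trace_one]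

lemma trace_transpose_mul_diagonal_mul [Fintype m] [Fintype n] [DecidableEq m] (C : Matrix m n ℝ)
    (d : m → ℝ) : (Cᵀ * diagonal d * C).trace = ∑ i, d i * (C * Cᵀ) i i := by
  rw [Matrix.mul_assoc, trace_mul_comm, Matrix.mul_assoc]
  simp only [trace, diag, diagonal_mul]

lemma trace_transpose_mul_self_submatrix {l : Type*} [Fintype l] [Fintype n] (C : Matrix m n ℝ)
    (e : l → m) : ((C.submatrix e id)ᵀ * C.submatrix e id).trace = ∑ j, (C * Cᵀ) (e j) (e j) := by
  rw [trace_mul_comm]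
  simp [trace, mul_apply]

lemma transpose_mul_mul_mul [Fintype m] (X M : Matrix m m ℝ) (C : Matrix m n ℝ) :
    (X * C)ᵀ * M * (X * C) = Cᵀ * (Xᵀ * M * X) * C := by
  simp only [transpose_mul, Matrix.mul_assoc]

lemma transpose_one_submatrix_mul_mul {l : Type*} [Fintype m] [DecidableEq m] (e : l → m)
    (M : Matrix m m ℝ) :
    ((1 : Matrix m m ℝ).submatrix id e)ᵀ * M * (1 : Matrix m m ℝ).submatrix id e =
      M.submatrix e e := by
  rw [transpose_submatrix, transpose_one, Matrix.mul_assoc]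
  exact (one_submatrix_mul e (Equiv.refl m) _).trans
    (congrArg (submatrix · e id) (mul_submatrix_one (Equiv.refl m) e M))

end Matrix

lemma energy_mul_of_orthonormal {m n : Type*} [Fintype m] [Fintype n] [DecidableEq m]
    [DecidableEq n] {A B X : Matrix m m ℝ} {C : Matrix m n ℝ}
    (hXB : Xᵀ * B * X = 1) (hC : Cᵀ * C = 1) :
    energy A B (X * C) = (Cᵀ * (Xᵀ * A * X) * C).trace / Fintype.card n := by
  rw [energy, transpose_mul_mul_mul, transpose_mul_mul_mul, hXB, Matrix.mul_one, hC, trace_one]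

lemma energy_submatrix_of_orthonormal {l m : Type*} [Fintype l] [Fintype m] [DecidableEq l]
    [DecidableEq m] {A B X : Matrix m m ℝ} (hXB : Xᵀ * B * X = 1) {e : l → m}
    (he : Function.Injective e) :
    energy A B (X.submatrix id e) = ((Xᵀ * A * X).submatrix e e).trace / Fintype.card l := by
  have hXe : X.submatrix id e = X * (1 : Matrix m m ℝ).submatrix id e :=
    (mul_submatrix_one (Equiv.refl m) e X).symm
  have hC : ((1 : Matrix m m ℝ).submatrix id e)ᵀ * (1 : Matrix m m ℝ).submatrix id e = 1 := by
    simpa [submatrix_one _ he] using transpose_one_submatrix_mul_mul e (1 : Matrix m m ℝ)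
  rw [hXe, energy_mul_of_orthonormal hXB hC, transpose_one_submatrix_mul_mul]

lemma sub_mul_sum_inr_le {ι κ : Type*} [Fintype ι] [Fintype κ] {w d : ι ⊕ κ → ℝ} {a b : ℝ}
    (hw0 : ∀ j, 0 ≤ w (.inr j)) (hw1 : ∀ i, w (.inl i) ≤ 1) (hw : ∑ i, w i = Fintype.card ι)
    (ha : ∀ i, a ≤ d (.inl i)) (hb : ∀ j, d (.inr j) ≤ b) :
    (a - b) * ∑ j, w (.inr j) ≤ ∑ i, d (.inl i) - ∑ i, d i * w i := by
  rw [Fintype.sum_sum_type] at hw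
  have hmass : ∑ j, w (.inr j) = ∑ i, (1 - w (.inl i)) := by
    rw [Finset.sum_sub_distrib, Finset.sum_const, Finset.card_univ, nsmul_one]
    linarith
  have hhigh : a * ∑ j, w (.inr j) ≤ ∑ i, d (.inl i) * (1 - w (.inl i)) := by
    rw [hmass, Finset.mul_sum]
    exact Finset.sum_le_sum fun i _ => mul_le_mul_of_nonneg_right (ha i) (sub_nonneg.2 (hw1 i))
  have hlow : ∑ j, d (.inr j) * w (.inr j) ≤ b * ∑ j, w (.inr j) := by
    rw [Finset.mul_sum]
    exact Finset.sum_le_sum fun j _ => mul_le_mul_of_nonneg_right (hb j) (hw0 j)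
  simp only [Fintype.sum_sum_type, mul_sub, mul_one, Finset.sum_sub_distrib] at hhigh ⊢
  linarith

theorem stmt_7_general (k m : ℕ)
    (A B : Matrix (Fin (k+1) ⊕ Fin (m+1)) (Fin (k+1) ⊕ Fin (m+1)) ℝ)
    (lam : Fin (k+1) ⊕ Fin (m+1) → ℝ)
    (X : Matrix (Fin (k+1) ⊕ Fin (m+1)) (Fin (k+1) ⊕ Fin (m+1)) ℝ)
    (hXB : Xᵀ * B * X = 1)
    (hXA : Xᵀ * A * X = Matrix.diagonal lam)
    (hmono_h : ∀ i j : Fin (k+1), i ≤ j → lam (Sum.inl j) ≤ lam (Sum.inl i))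
    (hmono_l : ∀ i j : Fin (m+1), i ≤ j → lam (Sum.inr j) ≤ lam (Sum.inr i))
    (hgap : lam (Sum.inr 0) < lam (Sum.inl (Fin.last k)))
    (Y C : Matrix (Fin (k+1) ⊕ Fin (m+1)) (Fin (k+1)) ℝ)
    (hYB : Yᵀ * B * Y = 1)
    (hYC : Y = X * C) :
    ((C.submatrix Sum.inr id)ᵀ * (C.submatrix Sum.inr id)).trace ≤
      ((k : ℝ) + 1) * (energy A B (X.submatrix id Sum.inl) - energy A B Y) /
        (lam (Sum.inl (Fin.last k)) - lam (Sum.inr 0)) := by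
  have hC : Cᵀ * C = 1 := by
    rwa [hYC, transpose_mul_mul_mul, hXB, Matrix.mul_one] at hYB
  have hEX : energy A B (X.submatrix id Sum.inl) = (∑ i, lam (Sum.inl i)) / (k + 1) := by
    rw [energy_submatrix_of_orthonormal hXB Sum.inl_injective, hXA,
      submatrix_diagonal _ _ Sum.inl_injective, trace_diagonal]
    simp
  have hEY : energy A B Y = (∑ i, lam i * (C * Cᵀ) i i) / (k + 1) := by
    rw [hYC, energy_mul_of_orthonormal hXB hC, hXA, trace_transpose_mul_diagonal_mul]
    simp
  have hkey := sub_mul_sum_inr_le (w := fun i => (C * Cᵀ) i i) (d := lam)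
    (fun j => diag_mul_transpose_nonneg C _) (fun i => diag_mul_transpose_le_one hC _)
    (by simpa using sum_diag_mul_transpose hC) (fun i => hmono_h i _ (Fin.le_last i))
    (fun j => hmono_l 0 j (Fin.zero_le j))
  rw [trace_transpose_mul_self_submatrix, le_div_iff₀ (sub_pos.2 hgap), hEX, hEY, ← sub_div,
    mul_div_cancel₀ _ (by positivity)]
  linarith

/-- Lemma 4.3 (trace bound): `Tr(CˡᵀCˡ) ≤ k(E(Xʰ) − E(Y))/(λ_k − λ_{k+1})`.
The high block has size `k+1` and the low block size `m+1`; `λ_k` is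
`lam (Sum.inl (Fin.last k))` and `λ_{k+1}` is `lam (Sum.inr 0)`. -/
theorem stmt_7 (k m : ℕ)
    (A B : Matrix (Fin (k+1) ⊕ Fin (m+1)) (Fin (k+1) ⊕ Fin (m+1)) ℝ)
    (hA : A.PosDef) (hB : B.PosDef)
    (lam : Fin (k+1) ⊕ Fin (m+1) → ℝ)
    (X : Matrix (Fin (k+1) ⊕ Fin (m+1)) (Fin (k+1) ⊕ Fin (m+1)) ℝ)
    (heig : A * X = B * X * Matrix.diagonal lam)
    (hXB : Xᵀ * B * X = 1)
    (hXA : Xᵀ * A * X = Matrix.diagonal lam)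
    (hmono_h : ∀ i j : Fin (k+1), i ≤ j → lam (Sum.inl j) ≤ lam (Sum.inl i))
    (hmono_l : ∀ i j : Fin (m+1), i ≤ j → lam (Sum.inr j) ≤ lam (Sum.inr i))
    (hgap : lam (Sum.inr 0) < lam (Sum.inl (Fin.last k)))
    (hpos : ∀ i, 0 < lam i)
    (Y C : Matrix (Fin (k+1) ⊕ Fin (m+1)) (Fin (k+1)) ℝ)
    (hYB : Yᵀ * B * Y = 1)
    (hYC : Y = X * C) :
    ((C.submatrix Sum.inr id)ᵀ * (C.submatrix Sum.inr id)).trace ≤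
      ((k : ℝ) + 1) * (energy A B (X.submatrix id Sum.inl) - energy A B Y) /
        (lam (Sum.inl (Fin.last k)) - lam (Sum.inr 0)) :=
  stmt_7_general k m A B lam X hXB hXA hmono_h hmono_l hgap Y C hYB hYC
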